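/- Let φ : [0,m] → ℝ be given by (1+τ)φ(τ) = −(A/6)τ⁴ − ((A+B)/3)τ³ − (B+2)τ² + Cτ + D. Then φ satisfies the extremal ODE [(1+τ)φ]'' = −2Aτ² − 2(A+B)τ − 2B − 4, equivalently the scalar curvature S(τ) = (1/(2(1+τ)))·(−4 − [(1+τ)φ]'') equals the affine function Aτ + B. Moreover, imposing φ(0) = φ(m) = 0, φ′(0) = 2, φ′(m) = −2 uniquely determines A, B, C, D, and yields φ(τ) = 2τ(m−τ)[(2m+2)τ² + (−m²+4m+6)τ + m²+6m+6] / (m(m²+6m+6)(1+τ)). -/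

import Mathlib

/-!
Differentiating the quartic `Q = (1+τ)φ` twice gives the extremal ODE directly. For the
boundary problem, `φ(τ₀) = 0` forces `Q(τ₀) = 0` and then `φ'(τ₀) = Q'(τ₀)/(1+τ₀)`, so the four
conditions read `D = 0`, `C = 2`, `Q(m) = 0`, `Q'(m) = -2(1+m)`. The last two form a linear
system in `A, B` with determinant `-m³(m²+6m+6)/18`, which is non-zero for `m > 0`.
-/

/-- The quartic `(1+τ)·φ(τ)` of the extremal ODE ansatz. -/
noncomputable def extremalQuartic (A B C D τ : ℝ) : ℝ :=
  -(A / 6) * τ ^ 4 - ((A + B) / 3) * τ ^ 3 - (B + 2) * τ ^ 2 + C * τ + D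

/-- The momentum profile `φ(τ)` determined by `(1+τ)φ(τ) = extremalQuartic`. -/
noncomputable def extremalProfile (A B C D τ : ℝ) : ℝ :=
  extremalQuartic A B C D τ / (1 + τ)

noncomputable def extremalQuarticDeriv (A B C τ : ℝ) : ℝ :=
  -(2 * A / 3) * τ ^ 3 - (A + B) * τ ^ 2 - 2 * (B + 2) * τ + C

section

variable (A B C D : ℝ)

theorem hasDerivAt_extremalQuartic (τ : ℝ) :
    HasDerivAt (extremalQuartic A B C D) (extremalQuarticDeriv A B C τ) τ := by
  refine (((((hasDerivAt_pow 4 τ).const_mul (-(A / 6))).sub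
    ((hasDerivAt_pow 3 τ).const_mul ((A + B) / 3))).sub
    ((hasDerivAt_pow 2 τ).const_mul (B + 2))).add ((hasDerivAt_id τ).const_mul C)).add_const D
    |>.congr_deriv ?_
  simp only [extremalQuarticDeriv]
  push_cast
  ring

theorem hasDerivAt_extremalQuarticDeriv (τ : ℝ) :
    HasDerivAt (extremalQuarticDeriv A B C)
      (-2 * A * τ ^ 2 - 2 * (A + B) * τ - 2 * B - 4) τ := by
  refine ((((hasDerivAt_pow 3 τ).const_mul (-(2 * A / 3))).sub
    ((hasDerivAt_pow 2 τ).const_mul (A + B))).sub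
    ((hasDerivAt_id τ).const_mul (2 * (B + 2)))).add_const C |>.congr_deriv ?_
  push_cast
  ring

theorem deriv_extremalQuartic : deriv (extremalQuartic A B C D) = extremalQuarticDeriv A B C :=
  funext fun τ => (hasDerivAt_extremalQuartic A B C D τ).deriv

theorem deriv_deriv_extremalQuartic (τ : ℝ) :
    deriv (deriv (extremalQuartic A B C D)) τ =
      -2 * A * τ ^ 2 - 2 * (A + B) * τ - 2 * B - 4 := by
  rw [deriv_extremalQuartic]
  exact (hasDerivAt_extremalQuarticDeriv A B C τ).deriv

theorem hasDerivAt_extremalProfile {τ : ℝ} (hτ : 1 + τ ≠ 0) :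
    HasDerivAt (extremalProfile A B C D)
      ((extremalQuarticDeriv A B C τ * (1 + τ) - extremalQuartic A B C D τ) / (1 + τ) ^ 2) τ :=
  (hasDerivAt_extremalQuartic A B C D τ).div ((hasDerivAt_id τ).const_add 1) hτ
    |>.congr_deriv (by simp only [mul_one, id])

theorem extremalQuartic_of_profile_eq_zero {τ s : ℝ} (hτ : 1 + τ ≠ 0)
    (hφ : extremalProfile A B C D τ = 0) (hφ' : HasDerivAt (extremalProfile A B C D) s τ) :
    extremalQuartic A B C D τ = 0 ∧ extremalQuarticDeriv A B C τ = s * (1 + τ) := by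
  have hQ : extremalQuartic A B C D τ = 0 :=
    (div_eq_zero_iff.mp hφ).resolve_right hτ
  refine ⟨hQ, ?_⟩
  have hs := hφ'.unique (hasDerivAt_extremalProfile A B C D hτ)
  rw [hs, hQ]
  field_simp
  ring

end

theorem extremal_coeffs_of_boundary {m A B : ℝ} (hm : m ≠ 0) (hK : m ^ 2 + 6 * m + 6 ≠ 0)
    (hQ : extremalQuartic A B 2 0 m = 0) (hQ' : extremalQuarticDeriv A B 2 m = -2 * (1 + m)) :
    A = 24 * (m + 1) / (m * (m ^ 2 + 6 * m + 6)) ∧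
      B = (12 - 12 * m - 18 * m ^ 2) / (m * (m ^ 2 + 6 * m + 6)) := by
  unfold extremalQuartic at hQ
  unfold extremalQuarticDeriv at hQ'
  constructor
  · rw [eq_div_iff (mul_ne_zero hm hK)]
    apply mul_left_cancel₀ (pow_ne_zero 2 hm)
    linear_combination 18 * (m + 2) * hQ - 6 * m * (m + 3) * hQ'
  · rw [eq_div_iff (mul_ne_zero hm hK)]
    apply mul_left_cancel₀ (pow_ne_zero 2 hm)
    linear_combination 3 * m ^ 2 * (m + 2) * hQ' - 6 * m * (2 * m + 3) * hQ

/-- the quartic ansatz satisfies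
`[(1+τ)φ]'' = −2Aτ² − 2(A+B)τ − 2B − 4`, equivalently the scalar curvature
`S(τ) = (1/(2(1+τ)))(−4 − [(1+τ)φ]'')` equals `Aτ + B`; and the boundary
conditions `φ(0) = φ(m) = 0`, `φ′(0) = 2`, `φ′(m) = −2` determine the constants,
yielding the displayed closed form for `φ`. -/
theorem stmt_17 (m : ℝ) (hm : 0 < m) (A B C D : ℝ) :
    (∀ τ : ℝ, deriv (deriv (extremalQuartic A B C D)) τ =
      -2 * A * τ ^ 2 - 2 * (A + B) * τ - 2 * B - 4) ∧
    (∀ τ : ℝ, 1 + τ ≠ 0 →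
      1 / (2 * (1 + τ)) * (-4 - deriv (deriv (extremalQuartic A B C D)) τ) =
        A * τ + B) ∧
    (extremalProfile A B C D 0 = 0 → extremalProfile A B C D m = 0 →
      HasDerivAt (extremalProfile A B C D) 2 0 →
      HasDerivAt (extremalProfile A B C D) (-2) m →
      ∀ τ : ℝ, 1 + τ ≠ 0 →
        extremalProfile A B C D τ =
          2 * τ * (m - τ) *
              ((2 * m + 2) * τ ^ 2 + (-m ^ 2 + 4 * m + 6) * τ + m ^ 2 + 6 * m + 6) /
            (m * (m ^ 2 + 6 * m + 6) * (1 + τ))) := by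
  refine ⟨deriv_deriv_extremalQuartic A B C D, fun τ hτ => ?_,
    fun hφ₀ hφm hφ'₀ hφ'm τ hτ => ?_⟩
  · rw [deriv_deriv_extremalQuartic]
    field_simp
    ring
  · obtain ⟨rfl, rfl⟩ : D = 0 ∧ C = 2 := by
      simpa [extremalQuartic, extremalQuarticDeriv] using
        extremalQuartic_of_profile_eq_zero A B C D (by norm_num) hφ₀ hφ'₀
    obtain ⟨hQm, hQ'm⟩ := extremalQuartic_of_profile_eq_zero A B 2 0 (by positivity) hφm hφ'm
    obtain ⟨rfl, rfl⟩ := extremal_coeffs_of_boundary hm.ne' (by positivity) hQm hQ'm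
    rw [extremalProfile, extremalQuartic]
    field_simp
    ring
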